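/- (Mass preservation.) Let ρ₀ ∈ M_TV(ℝ^d), let Φ be an admissible flux interpolation, and let v : [0,T] → (antisymmetric vector fields on G) satisfy ∫₀^T sup_{x∈ℝ^d} ∫_{ℝ^d∖{x}} |v_t(x,y)| η(x,y) dμ(y) dt ≤ C_v for some C_v > 0. Let ρ : [0,T] → M_TV(ℝ^d) satisfy the integral form of the nonlocal continuity equation with initial datum ρ₀. Then ∇̄·F^Φ[μ;ρ_t,v_t][ℝ^d] = 0 for all t ∈ [0,T] and consequently ρ_t[ℝ^d] = ρ₀[ℝ^d] for a.e. t ∈ [0,T]. -/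
import Mathlib


open MeasureTheory Set Filter

noncomputable section

/-- Euclidean space `ℝ^d`. -/
abbrev Rd (d : ℕ) := EuclideanSpace ℝ (Fin d)

/-- Total variation norm `‖ρ‖_TV = |ρ|(ℝ^d)` of a signed measure (a Radon measure with
finite total variation). -/
def tvNorm {d : ℕ} (ρ : SignedMeasure (Rd d)) : ℝ := (ρ.totalVariation Set.univ).toReal

/-- The edge set `G = {(x,y) : x ≠ y, η(x,y) > 0}`. -/
def Gset {d : ℕ} (η : Rd d × Rd d → ℝ) : Set (Rd d × Rd d) := {p | p.1 ≠ p.2 ∧ 0 < η p}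

/-- Assumption (η): the weight function is continuous off the diagonal, bounded,
nonnegative and symmetric. -/
def WeightFun {d : ℕ} (η : Rd d × Rd d → ℝ) : Prop :=
  ContinuousOn η {p : Rd d × Rd d | p.1 ≠ p.2} ∧ (∃ C, ∀ p, η p ≤ C) ∧
  (∀ p, 0 ≤ η p) ∧ ∀ x y : Rd d, η (x, y) = η (y, x)

/-- Admissible flux interpolation with Lipschitz constant `L`: a measurable
`Φ : ℝ³ → ℝ` with the normalisation `Φ(0,0;v) = Φ(a,b;0) = 0`, the two Lipschitz
estimates, and positive one-homogeneity in the first two variables. -/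
def AdmissibleFlux (Φ : ℝ → ℝ → ℝ → ℝ) (L : ℝ) : Prop :=
  0 < L ∧ Measurable (fun q : ℝ × ℝ × ℝ => Φ q.1 q.2.1 q.2.2) ∧
  (∀ a b v : ℝ, Φ 0 0 v = 0 ∧ Φ a b 0 = 0) ∧
  (∀ a b v w : ℝ, |Φ a b w - Φ a b v| ≤ L * (|a| + |b|) * |w - v|) ∧
  (∀ a b c e v : ℝ, |Φ a b v - Φ c e v| ≤ L * (|a - c| + |b - e|) * |v|) ∧
  (∀ α a b w : ℝ, 0 < α → Φ (α * a) (α * b) w = α * Φ a b w)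

/-- Density `d(ρ ⊗ μ)/dλ` of the product of a signed measure `ρ` with `μ`,
with respect to a dominating measure `lam`. -/
def dProdL {d : ℕ} (ρ : SignedMeasure (Rd d)) (μ : Measure (Rd d))
    (lam : Measure (Rd d × Rd d)) (p : Rd d × Rd d) : ℝ :=
  ((ρ.toJordanDecomposition.posPart.prod μ).rnDeriv lam p).toReal -
    ((ρ.toJordanDecomposition.negPart.prod μ).rnDeriv lam p).toReal

/-- Density `d(μ ⊗ ρ)/dλ` with respect to a dominating measure `lam`. -/
def dProdR {d : ℕ} (ρ : SignedMeasure (Rd d)) (μ : Measure (Rd d))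
    (lam : Measure (Rd d × Rd d)) (p : Rd d × Rd d) : ℝ :=
  ((μ.prod ρ.toJordanDecomposition.posPart).rnDeriv lam p).toReal -
    ((μ.prod ρ.toJordanDecomposition.negPart).rnDeriv lam p).toReal

/-- The canonical dominating measure `λ = |ρ| ⊗ μ + μ ⊗ |ρ|`. -/
def lamOf {d : ℕ} (ρ : SignedMeasure (Rd d)) (μ : Measure (Rd d)) :
    Measure (Rd d × Rd d) :=
  ρ.totalVariation.prod μ + μ.prod ρ.totalVariation

/-- Nonlocal divergence `∇̄·F^Φ[μ; ρ, v]` of the flux, evaluated at a Borel set `A`: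
`∇̄·F^Φ[μ;ρ,v][A] = -(1/2) ∬_G (χ_A(y) - χ_A(x)) Φ(d(ρ⊗μ)/dλ, d(μ⊗ρ)/dλ; v) η dλ`. -/
def divFlux {d : ℕ} (μ : Measure (Rd d)) (η : Rd d × Rd d → ℝ) (Φ : ℝ → ℝ → ℝ → ℝ)
    (ρ : SignedMeasure (Rd d)) (v : Rd d × Rd d → ℝ) (A : Set (Rd d)) : ℝ :=
  -(1/2) * ∫ p in Gset η,
      (A.indicator (fun _ => (1:ℝ)) p.2 - A.indicator (fun _ => (1:ℝ)) p.1) *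
        (Φ (dProdL ρ μ (lamOf ρ μ) p) (dProdR ρ μ (lamOf ρ μ) p) (v p) * η p)
      ∂(lamOf ρ μ)

/-- `v̄ = sup_{x ∈ ℝ^d} ∫_{ℝ^d ∖ {x}} |v(x,y)| η(x,y) dμ(y)`. -/
def vbar {d : ℕ} (μ : Measure (Rd d)) (η v : Rd d × Rd d → ℝ) : ℝ :=
  ⨆ x : Rd d, ∫ y in ({x} : Set (Rd d))ᶜ, |v (x, y)| * η (x, y) ∂μ

/-- Antisymmetric vector field on `G`. -/
def Antisym {d : ℕ} (v : Rd d × Rd d → ℝ) : Prop := ∀ x y : Rd d, v (y, x) = - v (x, y)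

/-- `ρ` satisfies the integral form of the nonlocal continuity equation with
velocity `v` and initial datum `ρ0`: for every Borel `A` and a.e. `t ∈ [0,T]`,
`ρ_t[A] + ∫₀^t ∇̄·F^Φ[μ;ρ_s,v_s][A] ds = ρ0[A]`. -/
def SatisfiesNCE {d : ℕ} (T : ℝ) (μ : Measure (Rd d)) (η : Rd d × Rd d → ℝ)
    (Φ : ℝ → ℝ → ℝ → ℝ) (v : ℝ → Rd d × Rd d → ℝ) (ρ0 : SignedMeasure (Rd d))
    (ρ : ℝ → SignedMeasure (Rd d)) : Prop :=
  ∀ A : Set (Rd d), MeasurableSet A →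
    ∀ᵐ t ∂(volume.restrict (Icc (0:ℝ) T)),
      ρ t A + ∫ s in (0:ℝ)..t, divFlux μ η Φ (ρ s) (v s) A = ρ0 A

/-- **Mass preservation.** Under the integrated compressibility bound,
for any solution of the integral form of the nonlocal continuity equation one has
`∇̄·F^Φ[μ;ρ_t,v_t][ℝ^d] = 0` for all `t ∈ [0,T]`, and consequently
`ρ_t[ℝ^d] = ρ₀[ℝ^d]` for a.e. `t ∈ [0,T]`. -/
theorem mass_preservation {d : ℕ} (T : ℝ) (hT : 0 < T)
    (μ : Measure (Rd d)) [IsLocallyFiniteMeasure μ]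
    (η : Rd d × Rd d → ℝ) (hη : WeightFun η)
    (Φ : ℝ → ℝ → ℝ → ℝ) (LΦ : ℝ) (hΦ : AdmissibleFlux Φ LΦ)
    (v : ℝ → Rd d × Rd d → ℝ) (hvas : ∀ t ∈ Icc (0:ℝ) T, Antisym (v t))
    (Cv : ℝ) (hCv : 0 < Cv) (hvC : ∫ t in (0:ℝ)..T, vbar μ η (v t) ≤ Cv)
    (ρ0 : SignedMeasure (Rd d)) (ρ : ℝ → SignedMeasure (Rd d))
    (hρmeas : ∀ A : Set (Rd d), MeasurableSet A → Measurable fun t : ℝ => ρ t A)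
    (hρ : SatisfiesNCE T μ η Φ v ρ0 ρ) :
    (∀ t ∈ Icc (0:ℝ) T, divFlux μ η Φ (ρ t) (v t) Set.univ = 0) ∧
    ∀ᵐ t ∂(volume.restrict (Icc (0:ℝ) T)), ρ t Set.univ = ρ0 Set.univ := by
  have hdiv : ∀ (σ : SignedMeasure (Rd d)) (w : Rd d × Rd d → ℝ),
      divFlux μ η Φ σ w Set.univ = 0 := by
    intro σ w
    unfold divFlux
    have : ∀ p : Rd d × Rd d,
        ((Set.univ : Set (Rd d)).indicator (fun _ => (1:ℝ)) p.2 -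
          (Set.univ : Set (Rd d)).indicator (fun _ => (1:ℝ)) p.1) *
          (Φ (dProdL σ μ (lamOf σ μ) p) (dProdR σ μ (lamOf σ μ) p) (w p) * η p) = 0 := by
      intro p
      simp [Set.indicator_univ]
    simp only [this, integral_zero, mul_zero]
  refine ⟨fun t _ => hdiv (ρ t) (v t), ?_⟩
  have h := hρ Set.univ MeasurableSet.univ
  filter_upwards [h] with t ht
  simpa [hdiv] using ht
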